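/- arXiv:1606.07518 — 6 statements merged into one kernel-verified Lean document; each statement's English description precedes it below -/
import Mathlib

section
/- Every countable union of locally closed sets in a topological space can be written as a countable union of pairwise disjoint locally closed sets. -/
/-!
Replacing `f` by its disjointed sequence `f n ∩ ⋂ i < n, (f i)ᶜ` reduces the problem to
decomposing each `disjointed f n`; decompositions of countably many pairwise disjoint sets
combine into one via `Nat.unpair`. Sets admitting a decomposition are closed under removing a
locally closed set `M = V ∩ D` (`V` open, `D` closed), because `L \ M = (L \ V) ∪ (L ∩ V \ D)`
splits a locally closed `L` into two disjoint locally closed pieces.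
-/

open Set Function

section

variable {X : Type*} [TopologicalSpace X]

def IsDisjointUnionOfLocallyClosed (s : Set X) : Prop :=
  ∃ B : ℕ → Set X, (∀ j, IsLocallyClosed (B j)) ∧ Pairwise (Disjoint on B) ∧ s = ⋃ j, B j

namespace IsDisjointUnionOfLocallyClosed

theorem iUnion {s : ℕ → Set X} (hs : ∀ i, IsDisjointUnionOfLocallyClosed (s i))
    (hd : Pairwise (Disjoint on s)) : IsDisjointUnionOfLocallyClosed (⋃ i, s i) := by
  choose B hB_lc hB_disj hB_eq using hs
  refine ⟨fun n ↦ B n.unpair.1 n.unpair.2, fun n ↦ hB_lc _ _, fun m n hmn ↦ ?_, ?_⟩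
  · by_cases h₁ : m.unpair.1 = n.unpair.1
    · have h₂ : m.unpair.2 ≠ n.unpair.2 := fun h₂ ↦
        hmn (by rw [← Nat.pair_unpair m, ← Nat.pair_unpair n, h₁, h₂])
      simpa [onFun, h₁] using hB_disj n.unpair.1 h₂
    · exact (hd h₁).mono (by rw [hB_eq]; exact subset_iUnion ..)
        (by rw [hB_eq]; exact subset_iUnion ..)
  · ext x
    simp only [hB_eq, mem_iUnion]
    exact ⟨fun ⟨i, j, hx⟩ ↦ ⟨Nat.pair i j, by simpa using hx⟩, fun ⟨n, hx⟩ ↦ ⟨_, _, hx⟩⟩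

theorem union_of_isLocallyClosed {s t : Set X} (hs : IsLocallyClosed s)
    (ht : IsLocallyClosed t) (hst : Disjoint s t) : IsDisjointUnionOfLocallyClosed (s ∪ t) := by
  refine ⟨fun | 0 => s | 1 => t | _ + 2 => ∅, ?_, ?_, ?_⟩
  · rintro (_ | _ | _)
    exacts [hs, ht, isClosed_empty.isLocallyClosed]
  · rintro (_ | _ | _) (_ | _ | _) h <;> simp_all [onFun, hst.symm]
  · ext x
    simp only [mem_union, mem_iUnion]
    constructor
    · rintro (hx | hx)
      exacts [⟨0, hx⟩, ⟨1, hx⟩]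
    · rintro ⟨_ | _ | _, hx⟩
      exacts [.inl hx, .inr hx, hx.elim]

end IsDisjointUnionOfLocallyClosed

theorem IsLocallyClosed.isDisjointUnionOfLocallyClosed_sdiff {L M : Set X}
    (hL : IsLocallyClosed L) (hM : IsLocallyClosed M) :
    IsDisjointUnionOfLocallyClosed (L \ M) := by
  obtain ⟨V, D, hV, hD, rfl⟩ := hM
  have h_split : L \ (V ∩ D) = L ∩ Vᶜ ∪ L ∩ (V ∩ Dᶜ) := by
    ext x
    simp only [mem_sdiff, mem_inter_iff, mem_union, mem_compl_iff]
    tauto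
  rw [h_split]
  exact .union_of_isLocallyClosed (hL.inter hV.isClosed_compl.isLocallyClosed)
    (hL.inter (hV.inter hD.isOpen_compl).isLocallyClosed)
    (disjoint_left.2 fun _ hx hx' ↦ hx.2 hx'.2.1)

theorem IsLocallyClosed.isDisjointUnionOfLocallyClosed {s : Set X} (hs : IsLocallyClosed s) :
    IsDisjointUnionOfLocallyClosed s := by
  simpa using hs.isDisjointUnionOfLocallyClosed_sdiff isClosed_empty.isLocallyClosed

namespace IsDisjointUnionOfLocallyClosed

theorem sdiff {s M : Set X} (hs : IsDisjointUnionOfLocallyClosed s) (hM : IsLocallyClosed M) :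
    IsDisjointUnionOfLocallyClosed (s \ M) := by
  obtain ⟨B, hB_lc, hB_disj, rfl⟩ := hs
  rw [iUnion_sdiff]
  exact iUnion (fun j ↦ (hB_lc j).isDisjointUnionOfLocallyClosed_sdiff hM)
    fun i j hij ↦ (hB_disj hij).mono sdiff_subset sdiff_subset

theorem inter_biInter_compl {s : Set X} (hs : IsDisjointUnionOfLocallyClosed s)
    {f : ℕ → Set X} (hf : ∀ i, IsLocallyClosed (f i)) (n : ℕ) :
    IsDisjointUnionOfLocallyClosed (s ∩ ⋂ i < n, (f i)ᶜ) := by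
  induction n with
  | zero => simpa using hs
  | succ n ih =>
    rw [biInter_lt_succ, ← inter_assoc, ← sdiff_eq]
    exact ih.sdiff (hf n)

end IsDisjointUnionOfLocallyClosed

end

theorem stmt_3 {X : Type*} [TopologicalSpace X] (A : Set X) (f : ℕ → Set X)
    (hf : ∀ i, IsLocallyClosed (f i)) (hA : A = ⋃ i, f i) :
    ∃ B : ℕ → Set X, (∀ j, IsLocallyClosed (B j)) ∧
      Pairwise (Function.onFun Disjoint B) ∧ A = ⋃ j, B j := by
  rw [hA, ← iUnion_disjointed]
  refine IsDisjointUnionOfLocallyClosed.iUnion (fun n ↦ ?_) (disjoint_disjointed f)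
  rw [disjointed_eq_inter_compl]
  exact (hf n).isDisjointUnionOfLocallyClosed.inter_biInter_compl hf n
end

section
/- Let ⟨A_i⟩_{i<λ} (λ ≤ ω) be a pseudo-stratification of a topological space X. Then there exists a sequence of open sets ⟨U_i⟩_{i<λ} such that (1) U_i ∩ closure(A_i) = A_i for all i, and (2) for all j < i, if U_i ∩ A_j ≠ ∅ then A_i ⊆ closure(A_j). -/
/-!
Each `A i` is open in its closure, so `coborder (A i)` is an open set cutting `closure (A i)` down
to `A i`. Removing from it the finitely many closed sets `closure (A j)`, `j < i`, that miss
`A i` keeps it open and does not change its trace on `closure (A i)`; by the dichotomy of a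
pseudo-stratification, an earlier stratum that still meets the result has `A i` in its closure.
-/

open Set

theorem IsLocallyClosed.exists_isOpen_inter_closure_eq_disjoint {X : Type*} [TopologicalSpace X]
    {s C : Set X} (hs : IsLocallyClosed s) (hC : IsClosed C) (hsC : Disjoint s C) :
    ∃ U, IsOpen U ∧ U ∩ closure s = s ∧ Disjoint U C :=
  ⟨coborder s \ C, hs.isOpen_coborder.sdiff hC,
    by rw [sdiff_inter_right_comm, coborder_inter_closure, sdiff_eq_left.2 hsC],
    disjoint_sdiff_left⟩

theorem stmt_6_general {X : Type*} [TopologicalSpace X] (A : ℕ → Set X)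
    (hlc : ∀ i, IsLocallyClosed (A i))
    (hstrat : ∀ j i : ℕ, j < i → A i ∩ closure (A j) = ∅ ∨ A i ⊆ closure (A j)) :
    ∃ U : ℕ → Set X, (∀ i, IsOpen (U i)) ∧ (∀ i, U i ∩ closure (A i) = A i) ∧
      ∀ j i : ℕ, j < i → (U i ∩ A j).Nonempty → A i ⊆ closure (A j) := by
  have hU : ∀ i, ∃ U, IsOpen U ∧ U ∩ closure (A i) = A i ∧
      ∀ j < i, A i ∩ closure (A j) = ∅ → Disjoint U (A j) := by
    intro i
    let missed := {j | j < i ∧ A i ∩ closure (A j) = ∅}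
    have hclosed : IsClosed (⋃ j ∈ missed, closure (A j)) :=
      ((finite_Iio i).subset fun _ hj => hj.1).isClosed_biUnion fun _ _ => isClosed_closure
    have hdisj : Disjoint (A i) (⋃ j ∈ missed, closure (A j)) :=
      disjoint_iUnion₂_right.2 fun _ hj => disjoint_iff_inter_eq_empty.2 hj.2
    obtain ⟨U, hUopen, hUA, hUdisj⟩ :=
      (hlc i).exists_isOpen_inter_closure_eq_disjoint hclosed hdisj
    exact ⟨U, hUopen, hUA, fun j hji hj =>
      hUdisj.mono_right (subset_closure.trans (subset_biUnion_of_mem (u := fun j => closure (A j))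
        (show j ∈ missed from ⟨hji, hj⟩)))⟩
  choose U hUopen hUA hUdisj using hU
  exact ⟨U, hUopen, hUA, fun j i hji hmeet =>
    (hstrat j i hji).resolve_left fun hmiss => not_disjoint_iff_nonempty_inter.2 hmeet
      (hUdisj i j hji hmiss)⟩

theorem stmt_6 {X : Type*} [TopologicalSpace X] (A : ℕ → Set X)
    (hlc : ∀ i, IsLocallyClosed (A i))
    (hdisj : Pairwise (Function.onFun Disjoint A))
    (hcover : (⋃ i, A i) = Set.univ)
    (hstrat : ∀ j i : ℕ, j < i → A i ∩ closure (A j) = ∅ ∨ A i ⊆ closure (A j)) :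
    ∃ U : ℕ → Set X, (∀ i, IsOpen (U i)) ∧ (∀ i, U i ∩ closure (A i) = A i) ∧
      ∀ j i : ℕ, j < i → (U i ∩ A j).Nonempty → A i ⊆ closure (A j) :=
  stmt_6_general A hlc hstrat
end

section
/- Every pseudo-stratification is linearly separated: if ⟨A_i⟩_{i<λ} (λ ≤ ω) is a pseudo-stratification of a topological space X, then there is a total (linear) order ⊴ on the index set such that for each i there is an open set U_i ⊇ A_i with U_i ∩ A_j = ∅ whenever j ⊴ i and j ≠ i. -/
/-!
Order the cells lexicographically by their closure profile, the set of indices `m` with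
`A i ⊆ closure (A m)` (lying in more early closures means coming earlier), breaking ties by the
index. A cell `A i` is then separated from the cells below it by its coborder, the largest set in
which it is closed, minus the finitely many closures `closure (A d)`, `d < i`, that it misses. A
cell `A j` below `A i` either lies in `closure (A i)`, hence outside the coborder of `A i`, or the
first index at which the profiles differ is some `d < i` with `A j ⊆ closure (A d)` and, by the
stratification condition, `A i` disjoint from `closure (A d)`.
-/

open Set

theorem Pi.Lex.le_or_exists_lt_of_toLex_le {ι β : Type*} [LinearOrder ι] [LinearOrder β]
    {f g : ι → β} (h : toLex f ≤ toLex g) (i : ι) :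
    f i ≤ g i ∨ ∃ d < i, f d < g d := by
  rcases h.lt_or_eq with ⟨d, hagree, hd⟩ | heq
  · rcases lt_trichotomy d i with hdi | rfl | hid
    · exact .inr ⟨d, hdi, hd⟩
    · exact .inl hd.le
    · exact .inl (hagree i hid).le
  · exact .inl (congrFun (toLex.injective heq) i).le

theorem disjoint_coborder_of_subset_closure {X : Type*} [TopologicalSpace X] {s t : Set X}
    (hst : Disjoint s t) (hs : s ⊆ closure t) : Disjoint s (coborder t) := by
  rw [coborder, disjoint_compl_right_iff_subset]
  exact subset_sdiff.mpr ⟨hs, hst⟩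

namespace PseudoStratification

variable {X : Type*} [TopologicalSpace X] (A : ℕ → Set X)

open Classical in
noncomputable def closureProfile (i : ℕ) : ℕ → Bool :=
  fun m => decide ¬ A i ⊆ closure (A m)

theorem closureProfile_eq_false_iff {i m : ℕ} :
    closureProfile A i m = false ↔ A i ⊆ closure (A m) := by
  simp [closureProfile]

noncomputable def separationKey (i : ℕ) : Lex (ℕ → Bool) ×ₗ ℕ :=
  toLex (toLex (closureProfile A i), i)

theorem separationKey_injective : Function.Injective (separationKey A) :=
  fun _ _ h => congrArg (fun k => (ofLex k).2) h

def separatingNbhd (i : ℕ) : Set X :=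
  coborder (A i) \ ⋃ d ∈ {d | d < i ∧ Disjoint (A i) (closure (A d))}, closure (A d)

theorem isOpen_separatingNbhd {i : ℕ} (hA : IsLocallyClosed (A i)) :
    IsOpen (separatingNbhd A i) :=
  hA.isOpen_coborder.sdiff <|
    ((finite_Iio i).subset fun _ hd => hd.1).isClosed_biUnion fun _ _ => isClosed_closure

theorem subset_separatingNbhd (i : ℕ) : A i ⊆ separatingNbhd A i :=
  subset_sdiff.mpr ⟨subset_coborder, disjoint_iUnion₂_right.mpr fun _ hd => hd.2⟩

theorem subset_closure_or_exists_of_separationKey_le {i j : ℕ}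
    (h : separationKey A j ≤ separationKey A i) :
    A j ⊆ closure (A i) ∨ ∃ d < i, A j ⊆ closure (A d) ∧ ¬ A i ⊆ closure (A d) := by
  have hii : closureProfile A i i = false := (closureProfile_eq_false_iff A).mpr subset_closure
  rcases Pi.Lex.le_or_exists_lt_of_toLex_le (Prod.Lex.monotone_fst _ _ h) i with
    hji | ⟨d, hdi, hd⟩
  · exact .inl <| (closureProfile_eq_false_iff A).mp (Bool.eq_false_of_le_false (hii ▸ hji))
  · obtain ⟨hjd, hid⟩ := Bool.lt_iff.mp hd
    refine .inr ⟨d, hdi, (closureProfile_eq_false_iff A).mp hjd, fun hsub => ?_⟩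
    exact Bool.false_ne_true (((closureProfile_eq_false_iff A).mpr hsub).symm.trans hid)

theorem disjoint_separatingNbhd_of_separationKey_le {i j : ℕ} (hij : Disjoint (A j) (A i))
    (hstrat : ∀ d < i, ¬ A i ⊆ closure (A d) → Disjoint (A i) (closure (A d)))
    (h : separationKey A j ≤ separationKey A i) : Disjoint (A j) (separatingNbhd A i) := by
  rcases subset_closure_or_exists_of_separationKey_le A h with hji | ⟨d, hdi, hjd, hid⟩
  · exact (disjoint_coborder_of_subset_closure hij hji).mono_right sdiff_subset
  · refine disjoint_left.mpr fun x hxj hxU => hxU.2 ?_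
    exact mem_biUnion ⟨hdi, hstrat d hdi hid⟩ (hjd hxj)

end PseudoStratification

open PseudoStratification

theorem stmt_7_general {X : Type*} [TopologicalSpace X] (A : ℕ → Set X)
    (hlc : ∀ i, IsLocallyClosed (A i))
    (hdisj : Pairwise (Function.onFun Disjoint A))
    (hstrat : ∀ j i : ℕ, j < i → A i ∩ closure (A j) = ∅ ∨ A i ⊆ closure (A j)) :
    ∃ le : ℕ → ℕ → Prop, IsLinearOrder ℕ le ∧
      ∀ i : ℕ, ∃ U : Set X, IsOpen U ∧ A i ⊆ U ∧
        ∀ j : ℕ, le j i → j ≠ i → U ∩ A j = ∅ := by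
  refine ⟨Function.onFun (· ≤ ·) (separationKey A),
    (separationKey_injective A).isLinearOrder_onFun _,
    fun i => ⟨separatingNbhd A i, isOpen_separatingNbhd A (hlc i), subset_separatingNbhd A i,
      fun j hji hne => ?_⟩⟩
  have hmiss : ∀ d < i, ¬ A i ⊆ closure (A d) → Disjoint (A i) (closure (A d)) :=
    fun d hdi hid => disjoint_iff_inter_eq_empty.mpr ((hstrat d i hdi).resolve_right hid)
  exact (disjoint_separatingNbhd_of_separationKey_le A (hdisj hne) hmiss hji).symm.inter_eq

theorem stmt_7 {X : Type*} [TopologicalSpace X] (A : ℕ → Set X)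
    (hlc : ∀ i, IsLocallyClosed (A i))
    (hdisj : Pairwise (Function.onFun Disjoint A))
    (hcover : (⋃ i, A i) = Set.univ)
    (hstrat : ∀ j i : ℕ, j < i → A i ∩ closure (A j) = ∅ ∨ A i ⊆ closure (A j)) :
    ∃ le : ℕ → ℕ → Prop, IsLinearOrder ℕ le ∧
      ∀ i : ℕ, ∃ U : Set X, IsOpen U ∧ A i ⊆ U ∧
        ∀ j : ℕ, le j i → j ≠ i → U ∩ A j = ∅ :=
  stmt_7_general A hlc hdisj hstrat
end

section
/- Let X be a topological space and let R be the relation on the index set of a pseudo-stratification defined by i R j iff U_i ∩ A_j ≠ ∅, where U_i are open sets satisfying U_i ∩ closure(A_i) = A_i and (j < i and U_i ∩ A_j ≠ ∅ implies A_i ⊆ closure(A_j)). Then R has no nontrivial cycles, i.e., its transitive closure is antisymmetric on distinct elements. -/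
/-!
Take a vertex `m` that is minimal on a nontrivial cycle and call `v` *escaped* if
`A v ⊄ closure (A m)`. The first step of the cycle away from `m` escapes, because
`U m ∩ closure (A m) = A m` is disjoint from the other strata. Escaping is then preserved along
the cycle: an escaped `b > m` has `U b ∩ A m = ∅`, so the open set `U b` misses `closure (A m)`
and every successor of `b` escapes too. But the cycle returns to `m`, which does not escape.
-/

namespace Relation

section MinimalOnCycle

variable {ι : Type*} [LinearOrder ι] {r : ι → ι → Prop} {m : ι} {escaped : ι → Prop}

theorem eq_of_transGen_of_transGen_of_minimal
    (hmin : ∀ v, TransGen r m v → TransGen r v m → m ≤ v) (hself : ¬ escaped m)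
    (hleave : ∀ v, r m v → v ≠ m → escaped v)
    (hstep : ∀ b c, m < b → escaped b → r b c → escaped c)
    {k : ι} (hmk : TransGen r m k) (hkm : TransGen r k m) : k = m := by
  have hlt : ∀ v, TransGen r m v → TransGen r v m → escaped v → m < v := fun v hmv hvm hv =>
    (hmin v hmv hvm).lt_of_ne (by rintro rfl; exact hself hv)
  have forward : ∀ v, TransGen r m v → TransGen r v m → v ≠ m → escaped v := by
    intro v hmv
    induction hmv with
    | single hmv => exact fun _ hv => hleave _ hmv hv
    | @tail b c hmb hbc ih =>
      intro hcm hc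
      have hbm : TransGen r b m := .head hbc hcm
      by_cases hb : b = m
      · exact hleave c (hb ▸ hbc) hc
      · have hb' := ih hbm hb
        exact hstep b c (hlt b hmb hbm hb') hb' hbc
  have backward : ∀ v, TransGen r v m → TransGen r m v → ¬ escaped v := by
    intro v hvm
    induction hvm using TransGen.head_induction_on with
    | single hvm => exact fun hmv hv => hself (hstep _ _ (hlt _ hmv (.single hvm) hv) hv hvm)
    | @head v c hvc hcm ih =>
      intro hmv hv
      exact ih (hmv.tail hvc) (hstep v c (hlt v hmv (.head hvc hcm) hv) hv hvc)
  by_contra hk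
  exact backward k hkm hmk (forward k hmk hkm hk)

end MinimalOnCycle

theorem transGen_antisymm_of_escape {ι : Type*} [LinearOrder ι] [WellFoundedLT ι]
    {r : ι → ι → Prop} (escapes : ι → ι → Prop) (hself : ∀ m, ¬ escapes m m)
    (hleave : ∀ m v, r m v → v ≠ m → escapes m v)
    (hstep : ∀ m b c, m < b → escapes m b → r b c → escapes m c)
    {i j : ι} (hij : TransGen r i j) (hji : TransGen r j i) : i = j := by
  obtain ⟨m, ⟨him, hmi⟩, hm⟩ :=
    wellFounded_lt.has_min {v | TransGen r i v ∧ TransGen r v i} ⟨i, hij.trans hji, hij.trans hji⟩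
  have hmin : ∀ v, TransGen r m v → TransGen r v m → m ≤ v := fun v hmv hvm =>
    not_lt.mp (hm v ⟨him.trans hmv, hvm.trans hmi⟩)
  have cycle_eq : ∀ {k}, TransGen r m k → TransGen r k m → k = m :=
    eq_of_transGen_of_transGen_of_minimal hmin (hself m) (hleave m) (hstep m)
  rw [cycle_eq hmi him, cycle_eq (hmi.trans hij) (hji.trans him)]

end Relation

section Strata

variable {X ι : Type*} [TopologicalSpace X] {A U : ι → Set X}

theorem not_subset_closure_of_inter_nonempty {i j : ι} (hU : U i ∩ closure (A i) = A i)
    (hdisj : Disjoint (A i) (A j)) (h : (U i ∩ A j).Nonempty) : ¬ A j ⊆ closure (A i) := by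
  obtain ⟨x, hxU, hxA⟩ := h
  intro hsub
  have hxi : x ∈ A i := hU ▸ ⟨hxU, hsub hxA⟩
  exact hdisj.ne_of_mem hxi hxA rfl

theorem not_subset_closure_of_inter_nonempty_of_not_subset_closure {m b c : ι}
    (hUb : IsOpen (U b)) (hU : (U b ∩ A m).Nonempty → A b ⊆ closure (A m))
    (hb : ¬ A b ⊆ closure (A m)) (h : (U b ∩ A c).Nonempty) : ¬ A c ⊆ closure (A m) := by
  have hdisj : Disjoint (U b) (closure (A m)) :=
    (Set.not_disjoint_iff_nonempty_inter.not_right.mpr (mt hU hb)).closure_right hUb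
  obtain ⟨x, hxU, hxA⟩ := h
  exact fun hsub => hdisj.ne_of_mem hxU (hsub hxA) rfl

end Strata

theorem stmt_8_general {X : Type*} [TopologicalSpace X] (A : ℕ → Set X) (U : ℕ → Set X)
    (hdisj : Pairwise (Function.onFun Disjoint A))
    (hUopen : ∀ i, IsOpen (U i))
    (hU1 : ∀ i, U i ∩ closure (A i) = A i)
    (hU2 : ∀ j i : ℕ, j < i → (U i ∩ A j).Nonempty → A i ⊆ closure (A j))
    (R : ℕ → ℕ → Prop) (hR : ∀ i j, R i j ↔ (U i ∩ A j).Nonempty) :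
    ∀ i j : ℕ, Relation.TransGen R i j → Relation.TransGen R j i → i = j := fun _ _ =>
  Relation.transGen_antisymm_of_escape (fun m v => ¬ A v ⊆ closure (A m))
    (fun _ hm => hm subset_closure)
    (fun m v hmv hv =>
      not_subset_closure_of_inter_nonempty (hU1 m) (hdisj hv.symm) ((hR m v).1 hmv))
    (fun m b c hmb hb hbc => not_subset_closure_of_inter_nonempty_of_not_subset_closure (hUopen b)
      (hU2 m b hmb) hb ((hR b c).1 hbc))

theorem stmt_8 {X : Type*} [TopologicalSpace X] (A : ℕ → Set X) (U : ℕ → Set X)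
    (hlc : ∀ i, IsLocallyClosed (A i))
    (hdisj : Pairwise (Function.onFun Disjoint A))
    (hcover : (⋃ i, A i) = Set.univ)
    (hstrat : ∀ j i : ℕ, j < i → A i ∩ closure (A j) = ∅ ∨ A i ⊆ closure (A j))
    (hUopen : ∀ i, IsOpen (U i))
    (hU1 : ∀ i, U i ∩ closure (A i) = A i)
    (hU2 : ∀ j i : ℕ, j < i → (U i ∩ A j).Nonempty → A i ⊆ closure (A j))
    (R : ℕ → ℕ → Prop) (hR : ∀ i j, R i j ↔ (U i ∩ A j).Nonempty) :
    ∀ i j : ℕ, Relation.TransGen R i j → Relation.TransGen R j i → i = j :=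
  stmt_8_general A U hdisj hUopen hU1 hU2 R hR
end

section
/- Every countable partition of a topological space into locally closed sets can be refined to a pseudo-stratification: there exists a countable partition Π' of X into locally closed sets, each cell of which is contained in some cell of the original partition, together with an enumeration ⟨B_i⟩_{i<λ} (λ ≤ ω) of Π' such that for j < i, either B_i ∩ closure(B_j) = ∅ or B_i ⊆ closure(B_j). -/
/-!
Build the refinement greedily, one cell per stage. At stage `n`, let `k` be least such that `A k`
still has uncovered points, and classify these points by the set of earlier cells `B j` (`j < n`)
whose closure contains them. The next cell `B n` is the class of a `⊆`-maximal such set `T`. As all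
points of `B n` share one pattern, `B n` either lies in `closure (B j)` or misses it, and it is
locally closed because the earlier cells are. By maximality of `T`, no leftover point of `A k` lies
in `closure (B n)`: the leftover points keep their patterns and `T` is no longer realised, so the
finite set of patterns realised in `A k` shrinks at every stage until `A k` is used up.
-/

open Set Filter

namespace PseudoStratification

section Greedy

variable {α β : Type*}

open scoped Classical in
noncomputable def nextPiece [LE β] (A : ℕ → Set α) (U : Set α) (c : α → β) : Set α :=
  if hA : ∃ k, (A k ∩ U).Nonempty then
    {y ∈ A (Nat.find hA) ∩ U | c y = Classical.epsilon (h := ⟨c (Nat.find_spec hA).some⟩)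
      (Maximal (· ∈ c '' (A (Nat.find hA) ∩ U)))}
  else ∅

lemma nextPiece_cases [Preorder β] (A : ℕ → Set α) (U : Set α) (c : α → β)
    (hc : ∀ k, (c '' (A k ∩ U)).Finite) :
    (nextPiece A U c = ∅ ∧ ∀ k, A k ∩ U = ∅) ∨
    ∃ k T, (∀ k' < k, A k' ∩ U = ∅) ∧ Maximal (· ∈ c '' (A k ∩ U)) T ∧
      nextPiece A U c = {y ∈ A k ∩ U | c y = T} := by
  classical
  unfold nextPiece
  split_ifs with h
  · exact Or.inr ⟨Nat.find h, _,
      fun k hk => not_nonempty_iff_eq_empty.mp (Nat.find_min h hk),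
      Classical.epsilon_spec ((hc _).exists_maximal ((Nat.find_spec h).image c)), rfl⟩
  · exact Or.inl ⟨rfl, fun k => not_nonempty_iff_eq_empty.mp fun hk => h ⟨k, hk⟩⟩

def uncovered (P : ℕ → Set α) (n : ℕ) : Set α := {y | ∀ j < n, y ∉ P j}

lemma uncovered_antitone (P : ℕ → Set α) : Antitone (uncovered P) :=
  fun _ _ hmn _ hy j hj => hy j (lt_of_lt_of_le hj hmn)

lemma uncovered_congr {P Q : ℕ → Set α} {n : ℕ} (h : ∀ j < n, P j = Q j) :
    uncovered P n = uncovered Q n := by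
  ext y
  exact forall₂_congr fun j hj => by rw [h j hj]

end Greedy

section ClosureIndices

variable {X : Type*} [TopologicalSpace X] {P : ℕ → Set X} {n j : ℕ} {y : X}

open scoped Classical in
noncomputable def closureIndices (P : ℕ → Set X) (n : ℕ) (y : X) : Finset ℕ :=
  {j ∈ Finset.range n | y ∈ closure (P j)}

@[simp]
lemma mem_closureIndices : j ∈ closureIndices P n y ↔ j < n ∧ y ∈ closure (P j) := by
  simp [closureIndices]

lemma closureIndices_subset_range : closureIndices P n y ⊆ Finset.range n := by
  classical
  exact Finset.filter_subset _ _

lemma finite_image_closureIndices (s : Set X) : (closureIndices P n '' s).Finite :=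
  (Finset.range n).powerset.finite_toSet.subset <| by
    rintro _ ⟨y, -, rfl⟩
    exact Finset.mem_coe.mpr (Finset.mem_powerset.mpr closureIndices_subset_range)

lemma closureIndices_congr {Q : ℕ → Set X} (h : ∀ j < n, P j = Q j) :
    closureIndices P n = closureIndices Q n := by
  ext y j
  simp only [mem_closureIndices]
  exact and_congr_right fun hj => by rw [h j hj]

lemma closureIndices_succ_of_notMem (hy : y ∉ closure (P n)) :
    closureIndices P (n + 1) y = closureIndices P n y := by
  ext j
  simp only [mem_closureIndices, Nat.lt_succ_iff_lt_or_eq]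
  grind

lemma isLocallyClosed_setOf_closureIndices_eq {A : Set X} {T : Finset ℕ}
    (hA : IsLocallyClosed A) (hP : ∀ j < n, IsLocallyClosed (P j))
    (hT : T ⊆ Finset.range n) :
    IsLocallyClosed {y ∈ A ∩ uncovered P n | closureIndices P n y = T} := by
  have hTn : ∀ j ∈ T, j < n := fun j hj => Finset.mem_range.mp (hT hj)
  have heq : {y ∈ A ∩ uncovered P n | closureIndices P n y = T} =
      A ∩ ((⋂ j ∈ T, closure (P j) \ P j) ∩ ⋂ j ∈ Finset.range n \ T, (closure (P j))ᶜ) := by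
    ext y
    simp only [uncovered, mem_ofPred_eq, mem_inter_iff, mem_iInter, Set.mem_sdiff, mem_compl_iff,
      Finset.mem_sdiff, Finset.mem_range, Finset.ext_iff, mem_closureIndices]
    have := fun j => subset_closure (s := P j)
    grind
  rw [heq]
  refine hA.inter (IsClosed.isLocallyClosed ?_ |>.inter (IsOpen.isLocallyClosed ?_))
  · exact isClosed_biInter fun j hj => by
      simpa [coborder] using (hP j (hTn j hj)).isOpen_coborder.isClosed_compl
  · exact isOpen_biInter_finset fun j _ => isClosed_closure.isOpen_compl

variable {S : Set X} {T : Finset ℕ}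

lemma closureIndices_ne_of_mem_uncovered_succ
    (hPn : P n = {y ∈ S ∩ uncovered P n | closureIndices P n y = T})
    (hy : y ∈ S ∩ uncovered P (n + 1)) : closureIndices P n y ≠ T := fun hyT =>
  hy.2 n n.lt_succ_self (hPn ▸ ⟨⟨hy.1, uncovered_antitone P n.le_succ hy.2⟩, hyT⟩)

lemma notMem_closure_of_mem_uncovered_succ
    (hT : Maximal (· ∈ closureIndices P n '' (S ∩ uncovered P n)) T)
    (hPn : P n = {y ∈ S ∩ uncovered P n | closureIndices P n y = T})
    (hy : y ∈ S ∩ uncovered P (n + 1)) : y ∉ closure (P n) := by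
  intro hyn
  have hTy : T ⊆ closureIndices P n y := by
    obtain ⟨z, -, hz⟩ := hT.prop
    intro j hj
    have hPnj : P n ⊆ closure (P j) := by
      intro x hx
      rw [hPn] at hx
      exact (mem_closureIndices.mp (hx.2 ▸ hj)).2
    exact mem_closureIndices.mpr
      ⟨(mem_closureIndices.mp (hz ▸ hj)).1, closure_minimal hPnj isClosed_closure hyn⟩
  have hy' : y ∈ S ∩ uncovered P n := ⟨hy.1, uncovered_antitone P n.le_succ hy.2⟩
  exact closureIndices_ne_of_mem_uncovered_succ hPn hy (hT.eq_of_ge ⟨y, hy', rfl⟩ hTy)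

lemma image_closureIndices_succ_ssubset
    (hT : Maximal (· ∈ closureIndices P n '' (S ∩ uncovered P n)) T)
    (hPn : P n = {y ∈ S ∩ uncovered P n | closureIndices P n y = T}) :
    closureIndices P (n + 1) '' (S ∩ uncovered P (n + 1)) ⊂
      closureIndices P n '' (S ∩ uncovered P n) := by
  have hsame : ∀ y ∈ S ∩ uncovered P (n + 1), closureIndices P (n + 1) y = closureIndices P n y :=
    fun y hy => closureIndices_succ_of_notMem (notMem_closure_of_mem_uncovered_succ hT hPn hy)
  refine ssubset_of_subset_not_subset ?_ fun hsub => ?_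
  · rintro _ ⟨y, hy, rfl⟩
    exact ⟨y, ⟨hy.1, uncovered_antitone P n.le_succ hy.2⟩, (hsame y hy).symm⟩
  · obtain ⟨y, hy, hyT⟩ := hsub hT.prop
    exact closureIndices_ne_of_mem_uncovered_succ hPn hy (hsame y hy ▸ hyT)

end ClosureIndices

section Pieces

variable {X : Type*} [TopologicalSpace X] (A : ℕ → Set X)

noncomputable def pieces (n : ℕ) : Set X :=
  let P j := if j < n then pieces j else ∅
  nextPiece A (uncovered P n) (closureIndices P n)

lemma pieces_eq (n : ℕ) :
    pieces A n = nextPiece A (uncovered (pieces A) n) (closureIndices (pieces A) n) := by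
  have h : ∀ j < n, (if j < n then pieces A j else ∅) = pieces A j := fun j hj => if_pos hj
  rw [pieces, uncovered_congr h, closureIndices_congr h]

lemma pieces_cases (n : ℕ) :
    (pieces A n = ∅ ∧ ∀ k, A k ∩ uncovered (pieces A) n = ∅) ∨
    ∃ k T, (∀ k' < k, A k' ∩ uncovered (pieces A) n = ∅) ∧
      Maximal (· ∈ closureIndices (pieces A) n '' (A k ∩ uncovered (pieces A) n)) T ∧
      pieces A n = {y ∈ A k ∩ uncovered (pieces A) n | closureIndices (pieces A) n y = T} := by
  rw [pieces_eq]
  exact nextPiece_cases _ _ _ fun _ => finite_image_closureIndices _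

lemma pieces_subset_uncovered (n : ℕ) : pieces A n ⊆ uncovered (pieces A) n := by
  rcases pieces_cases A n with ⟨h, -⟩ | ⟨k, T, -, -, h⟩ <;> rw [h]
  exacts [empty_subset _, fun y hy => hy.1.2]

lemma pairwise_disjoint_pieces : Pairwise (Function.onFun Disjoint (pieces A)) :=
  (pairwise_disjoint_on _).mpr fun j i hji =>
    disjoint_right.mpr fun _ hyi => pieces_subset_uncovered A i hyi j hji

lemma exists_pieces_subset (n : ℕ) : ∃ k, pieces A n ⊆ A k := by
  rcases pieces_cases A n with ⟨h, -⟩ | ⟨k, T, -, -, h⟩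
  exacts [⟨0, h ▸ empty_subset _⟩, ⟨k, h ▸ fun y hy => hy.1.1⟩]

lemma pieces_inter_closure_eq_empty_or_subset {j i : ℕ} (hji : j < i) :
    pieces A i ∩ closure (pieces A j) = ∅ ∨ pieces A i ⊆ closure (pieces A j) := by
  rcases pieces_cases A i with ⟨h, -⟩ | ⟨k, T, -, -, h⟩
  · exact Or.inl (by rw [h, empty_inter])
  by_cases hjT : j ∈ T
  · refine Or.inr fun y hy => ?_
    rw [h] at hy
    exact (mem_closureIndices.mp (hy.2 ▸ hjT)).2
  · refine Or.inl (eq_empty_iff_forall_notMem.mpr fun y ⟨hyi, hyj⟩ => hjT ?_)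
    rw [h] at hyi
    exact hyi.2 ▸ mem_closureIndices.mpr ⟨hji, hyj⟩

lemma isLocallyClosed_pieces (hA : ∀ k, IsLocallyClosed (A k)) (n : ℕ) :
    IsLocallyClosed (pieces A n) := by
  induction n using Nat.strong_induction_on with
  | _ n ih =>
  rcases pieces_cases A n with ⟨h, -⟩ | ⟨k, T, -, hT, h⟩
  · exact h ▸ isOpen_empty.isLocallyClosed
  obtain ⟨y, -, hyT⟩ := hT.prop
  exact h ▸ isLocallyClosed_setOf_closureIndices_eq (hA k) ih (hyT ▸ closureIndices_subset_range)

lemma eventually_inter_uncovered_pieces_eq_empty (k : ℕ) :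
    ∀ᶠ n in atTop, A k ∩ uncovered (pieces A) n = ∅ := by
  induction k using Nat.strong_induction_on with
  | _ k ih =>
  obtain ⟨n, hn⟩ : ∃ n, A k ∩ uncovered (pieces A) n = ∅ := by
    by_contra! hne
    obtain ⟨N, hN⟩ := eventually_atTop.mp ((finite_Iio k).eventually_all.mpr ih)
    -- From stage `N` on every stage works inside `A k`, shrinking its set of patterns.
    let patterns n := closureIndices (pieces A) n '' (A k ∩ uncovered (pieces A) n)
    refine not_strictAnti_of_wellFoundedLT (fun m => (patterns (N + m)).ncard)
      (strictAnti_nat_of_succ_lt fun m => ?_)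
    rcases pieces_cases A (N + m) with ⟨-, hall⟩ | ⟨k', T, hlow, hT, h⟩
    · exact ((hne _).ne_empty (hall k)).elim
    obtain rfl : k' = k := by
      refine le_antisymm (not_lt.mp fun hk => (hne _).ne_empty (hlow k hk)) (not_lt.mp fun hk => ?_)
      obtain ⟨y, hy, -⟩ := hT.prop
      exact (eq_empty_iff_forall_notMem.mp (hN (N + m) le_self_add k' hk)) y hy
    exact ncard_lt_ncard (image_closureIndices_succ_ssubset hT h) (finite_image_closureIndices _)
  exact eventually_atTop.mpr ⟨n, fun m hm =>
    subset_eq_empty (inter_subset_inter_right _ (uncovered_antitone _ hm)) hn⟩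

lemma iUnion_pieces : ⋃ n, pieces A n = ⋃ k, A k := by
  refine subset_antisymm (iUnion_subset fun n => ?_) (iUnion_subset fun k x hx => ?_)
  · obtain ⟨k, hk⟩ := exists_pieces_subset A n
    exact hk.trans (subset_iUnion A k)
  obtain ⟨n, hn⟩ := (eventually_inter_uncovered_pieces_eq_empty A k).exists
  by_contra hx'
  exact (eq_empty_iff_forall_notMem.mp hn) x
    ⟨hx, fun j _ hj => hx' (mem_iUnion_of_mem j hj)⟩

end Pieces

end PseudoStratification

open PseudoStratification in
theorem stmt_9_general {X : Type*} [TopologicalSpace X] (A : ℕ → Set X)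
    (hlc : ∀ i, IsLocallyClosed (A i))
    (hcover : (⋃ i, A i) = Set.univ) :
    ∃ B : ℕ → Set X, (∀ i, IsLocallyClosed (B i)) ∧
      Pairwise (Function.onFun Disjoint B) ∧
      (⋃ i, B i) = Set.univ ∧
      (∀ i, ∃ k, B i ⊆ A k) ∧
      (∀ j i : ℕ, j < i → B i ∩ closure (B j) = ∅ ∨ B i ⊆ closure (B j)) :=
  ⟨pieces A, isLocallyClosed_pieces A hlc, pairwise_disjoint_pieces A,
    (iUnion_pieces A).trans hcover, exists_pieces_subset A,
    fun _ _ => pieces_inter_closure_eq_empty_or_subset A⟩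

theorem stmt_9 {X : Type*} [TopologicalSpace X] (A : ℕ → Set X)
    (hlc : ∀ i, IsLocallyClosed (A i))
    (hdisj : Pairwise (Function.onFun Disjoint A))
    (hcover : (⋃ i, A i) = Set.univ) :
    ∃ B : ℕ → Set X, (∀ i, IsLocallyClosed (B i)) ∧
      Pairwise (Function.onFun Disjoint B) ∧
      (⋃ i, B i) = Set.univ ∧
      (∀ i, ∃ k, B i ⊆ A k) ∧
      (∀ j i : ℕ, j < i → B i ∩ closure (B j) = ∅ ∨ B i ⊆ closure (B j)) :=
  stmt_9_general A hlc hcover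
end

section
/- If {A_0, A_1} is a two-cell partition of a topological space X into locally closed sets, then either {A_0, A_1} is linearly separated in one of the two orders, or there is a refinement into at most four locally closed cells that is linearly separated. -/
/-!
Refine `{A₀, A₁}` by intersecting each cell with, or removing from it, the closure of the other,
and order the four cells as `A₀ ∩ cl A₁ < A₁ ∩ cl A₀ < A₀ \ cl A₁ < A₁ \ cl A₀`. The first cell
lies in `cl A₁ \ A₁`, which is closed because `A₁` is locally closed and misses the second cell.
The second cell lies in `cl A₁`, which the third cell misses, and the first three cells lie in
`cl A₀`, which the last one misses.
-/
open Set Function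

section

variable {X : Type*} [TopologicalSpace X]

def closureRefinement (A₀ A₁ : Set X) : Fin 4 → Set X :=
  ![A₀ ∩ closure A₁, A₁ ∩ closure A₀, A₀ \ closure A₁, A₁ \ closure A₀]

variable {A₀ A₁ : Set X}

theorem isLocallyClosed_closureRefinement (h₀ : IsLocallyClosed A₀) (h₁ : IsLocallyClosed A₁)
    (i : Fin 4) : IsLocallyClosed (closureRefinement A₀ A₁ i) := by
  have hcl {s : Set X} : IsLocallyClosed (closure s) := isClosed_closure.isLocallyClosed
  have hop {s : Set X} : IsLocallyClosed (closure s)ᶜ :=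
    isClosed_closure.isOpen_compl.isLocallyClosed
  fin_cases i
  exacts [h₀.inter hcl, h₁.inter hcl, h₀.inter hop, h₁.inter hop]

theorem pairwise_disjoint_closureRefinement (hdisj : Disjoint A₀ A₁) :
    Pairwise (Disjoint on closureRefinement A₀ A₁) := by
  intro i j hij
  have := disjoint_left.mp hdisj
  fin_cases i <;> fin_cases j <;> simp [closureRefinement, disjoint_left] at hij ⊢ <;> grind

theorem iUnion_closureRefinement : ⋃ i, closureRefinement A₀ A₁ i = A₀ ∪ A₁ := by
  ext x
  simp only [closureRefinement, mem_iUnion, Fin.exists_fin_succ, Matrix.cons_val_zero,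
    Matrix.cons_val_succ, Matrix.cons_val_fin_one, exists_const, mem_inter_iff, mem_sdiff,
    mem_union]
  tauto

theorem closureRefinement_subset (i : Fin 4) :
    closureRefinement A₀ A₁ i ⊆ A₀ ∨ closureRefinement A₀ A₁ i ⊆ A₁ := by
  fin_cases i
  exacts [.inl inter_subset_left, .inr inter_subset_left, .inl sdiff_subset, .inr sdiff_subset]

theorem inter_closure_biUnion_eq_empty {ι : Type*} {B : ι → Set X} {S : Set ι} {s C : Set X}
    (hC : IsClosed C) (hBC : ∀ j ∈ S, B j ⊆ C) (hsC : Disjoint s C) :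
    s ∩ closure (⋃ j ∈ S, B j) = ∅ :=
  (hsC.mono_right (closure_minimal (iUnion₂_subset hBC) hC)).inter_eq

theorem IsLocallyClosed.isClosed_closure_sdiff {s : Set X} (h : IsLocallyClosed s) :
    IsClosed (closure s \ s) :=
  isOpen_compl_iff.mp h.isOpen_coborder

theorem closureRefinement_inter_closure_biUnion_lt (h₁ : IsLocallyClosed A₁)
    (hdisj : Disjoint A₀ A₁) (i : Fin 4) :
    closureRefinement A₀ A₁ i ∩ closure (⋃ j ∈ {j | j < i}, closureRefinement A₀ A₁ j) = ∅ := by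
  fin_cases i
  · exact inter_closure_biUnion_eq_empty isClosed_empty (by simp) (disjoint_empty _)
  · refine inter_closure_biUnion_eq_empty h₁.isClosed_closure_sdiff ?_
      (disjoint_sdiff_right.mono_left inter_subset_left)
    intro j (hj : j < 1)
    fin_cases j
    · exact fun x hx => ⟨hx.2, disjoint_left.mp hdisj hx.1⟩
    all_goals exact absurd hj (by decide)
  · refine inter_closure_biUnion_eq_empty isClosed_closure ?_ disjoint_sdiff_left
    intro j (hj : j < 2)
    fin_cases j
    · exact inter_subset_right
    · exact inter_subset_left.trans subset_closure
    all_goals exact absurd hj (by decide)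
  · refine inter_closure_biUnion_eq_empty isClosed_closure ?_ disjoint_sdiff_left
    intro j (hj : j < 3)
    fin_cases j
    · exact inter_subset_left.trans subset_closure
    · exact inter_subset_right
    · exact sdiff_subset.trans subset_closure
    · exact absurd hj (by decide)

end

theorem stmt_10 {X : Type*} [TopologicalSpace X] (A₀ A₁ : Set X)
    (h0 : IsLocallyClosed A₀) (h1 : IsLocallyClosed A₁)
    (hdisj : Disjoint A₀ A₁) (hcover : A₀ ∪ A₁ = Set.univ) :
    (A₀ ∩ closure A₁ = ∅ ∨ A₁ ∩ closure A₀ = ∅) ∨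
    ∃ B : Fin 4 → Set X, (∀ i, IsLocallyClosed (B i)) ∧
      Pairwise (Function.onFun Disjoint B) ∧
      (⋃ i, B i) = Set.univ ∧
      (∀ i, B i ⊆ A₀ ∨ B i ⊆ A₁) ∧
      ∃ le : Fin 4 → Fin 4 → Prop, IsLinearOrder (Fin 4) le ∧
        ∀ i, B i ∩ closure (⋃ j ∈ {j | le j i ∧ j ≠ i}, B j) = ∅ := by
  refine .inr ⟨closureRefinement A₀ A₁, isLocallyClosed_closureRefinement h0 h1,
    pairwise_disjoint_closureRefinement hdisj, iUnion_closureRefinement.trans hcover,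
    closureRefinement_subset, (· ≤ ·), inferInstance, fun i => ?_⟩
  simp_rw [← lt_iff_le_and_ne]
  exact closureRefinement_inter_closure_biUnion_lt h1 hdisj i
end
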